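/- arXiv:2501.03574 — 3 statements merged into one kernel-verified Lean document; each statement's English description precedes it below -/
import Mathlib

section
/- If w is a C² positive solution of -Δw + (y/2)·∇w + w/(p-1) = w^p on ℝⁿ, then the function τ = w^p / Λ(w), where Λ(w) = (1/(p-1))w + (1/2) y·∇w is assumed positive, satisfies (1/(Λ(w)²ρ)) div(Λ(w)² ρ ∇τ) = p(p-1) w^{p-2} |∇w|² / Λ(w), where ρ(y) = (4π)^{-n/2} e^{-|y|²/4}. -/
set_option maxHeartbeats 1000000

open Real Filter ContinuousLinearMap


/-- Laplacian as sum of second partial derivatives. -/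
noncomputable def lap {n : ℕ} (f : EuclideanSpace ℝ (Fin n) → ℝ)
    (x : EuclideanSpace ℝ (Fin n)) : ℝ :=
  ∑ i, fderiv ℝ (fun y => fderiv ℝ f y (EuclideanSpace.single i 1)) x (EuclideanSpace.single i 1)

/-- Divergence of a vector field on ℝⁿ. -/
noncomputable def dvg {n : ℕ} (F : EuclideanSpace ℝ (Fin n) → EuclideanSpace ℝ (Fin n))
    (x : EuclideanSpace ℝ (Fin n)) : ℝ :=
  ∑ i, fderiv ℝ (fun y => F y i) x (EuclideanSpace.single i 1)

/-- Λ(w)(y) = w(y)/(p-1) + (y/2)·∇w(y). -/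
noncomputable def Lam {n : ℕ} (p : ℝ) (w : EuclideanSpace ℝ (Fin n) → ℝ)
    (y : EuclideanSpace ℝ (Fin n)) : ℝ :=
  w y / (p - 1) + (1 / 2) * (inner ℝ y (gradient w y) : ℝ)

namespace Stmt10Aux

variable {n : ℕ}

lemma inner_grad (f : EuclideanSpace ℝ (Fin n) → ℝ) (z v : EuclideanSpace ℝ (Fin n)) :
    (inner ℝ v (gradient f z) : ℝ) = fderiv ℝ f z v := by
  rw [real_inner_comm]
  exact InnerProductSpace.toDual_symm_apply

lemma grad_apply (f : EuclideanSpace ℝ (Fin n) → ℝ) (z : EuclideanSpace ℝ (Fin n)) (i : Fin n) :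
    gradient f z i = fderiv ℝ f z (EuclideanSpace.single i 1) := by
  rw [← inner_grad f z (EuclideanSpace.single i 1)]
  rw [EuclideanSpace.inner_single_left]
  simp

lemma sum_single (z : EuclideanSpace ℝ (Fin n)) :
    ∑ i, z i • (EuclideanSpace.single i (1:ℝ) : EuclideanSpace ℝ (Fin n)) = z := by
  ext j
  rw [WithLp.ofLp_sum, Finset.sum_apply]
  simp [EuclideanSpace.single_apply]

lemma clm_sum (L : EuclideanSpace ℝ (Fin n) →L[ℝ] ℝ) (z : EuclideanSpace ℝ (Fin n)) :
    L z = ∑ i, z i * L (EuclideanSpace.single i 1) := by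
  conv_lhs => rw [← sum_single z]
  rw [map_sum]
  simp [mul_comm]

lemma inner_single (v : EuclideanSpace ℝ (Fin n)) (i : Fin n) :
    (inner ℝ v (EuclideanSpace.single i (1:ℝ)) : ℝ) = v i := by
  rw [EuclideanSpace.inner_single_right]; simp

lemma norm_sq_grad (f : EuclideanSpace ℝ (Fin n) → ℝ) (z : EuclideanSpace ℝ (Fin n)) :
    ‖gradient f z‖ ^ 2 =
      ∑ i, fderiv ℝ f z (EuclideanSpace.single i 1) * fderiv ℝ f z (EuclideanSpace.single i 1) := by
  rw [← real_inner_self_eq_norm_sq, inner_grad, clm_sum (fderiv ℝ f z) (gradient f z)]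
  exact Finset.sum_congr rfl fun i _ => by rw [grad_apply]

end Stmt10Aux

/-- If w > 0 is a smooth solution of Δw - (y/2)·∇w - w/(p-1) + w^p = 0 on an open set U with
Λ(w) > 0, then τ = w^p/Λ(w) satisfies div(Λ(w)² ρ ∇τ) = p(p-1) w^{p-2} |∇w|² Λ(w) ρ on U,
where ρ(y) = (4π)^{-n/2} e^{-|y|²/4}. -/


theorem stmt10 (n : ℕ) (p : ℝ) (hp : 1 < p) (U : Set (EuclideanSpace ℝ (Fin n)))
    (hU : IsOpen U) (w : EuclideanSpace ℝ (Fin n) → ℝ) (hw : ContDiffOn ℝ (⊤ : ℕ∞) w U)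
    (hpos : ∀ y ∈ U, 0 < w y) (hΛ : ∀ y ∈ U, 0 < Lam p w y)
    (heq : ∀ y ∈ U,
      lap w y - (1 / 2) * (inner ℝ y (gradient w y) : ℝ) - w y / (p - 1) + w y ^ p = 0) :
    ∀ y ∈ U,
      dvg (fun z =>
          ((Lam p w z) ^ 2 * ((4 * Real.pi) ^ (-(n : ℝ) / 2) * Real.exp (-‖z‖ ^ 2 / 4))) •
            gradient (fun z' => w z' ^ p / Lam p w z') z) y
        = p * (p - 1) * w y ^ (p - 2) * ‖gradient w y‖ ^ 2 * Lam p w y *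
            ((4 * Real.pi) ^ (-(n : ℝ) / 2) * Real.exp (-‖y‖ ^ 2 / 4)) := by
  intro y hy
  have hwc : ∀ z ∈ U, ContDiffAt ℝ (⊤ : ℕ∞) w z := fun z hz => hw.contDiffAt (hU.mem_nhds hz)
  have hw' : ∀ z ∈ U, HasFDerivAt w (fderiv ℝ w z) z := fun z hz =>
    ((hwc z hz).differentiableAt (by simp)).hasFDerivAt
  have hAc : ∀ z ∈ U, ContDiffAt ℝ (⊤ : ℕ∞) (fderiv ℝ w) z := fun z hz => (hwc z hz).fderiv_right (by simp)
  have hA' : ∀ z ∈ U, HasFDerivAt (fderiv ℝ w) (fderiv ℝ (fderiv ℝ w) z) z := fun z hz =>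
    ((hAc z hz).differentiableAt (by simp)).hasFDerivAt
  have hB' : ∀ z ∈ U, HasFDerivAt (fderiv ℝ (fderiv ℝ w))
      (fderiv ℝ (fderiv ℝ (fderiv ℝ w)) z) z := fun z hz =>
    (((hAc z hz).fderiv_right (m := (⊤ : ℕ∞)) (by simp)).differentiableAt (by simp)).hasFDerivAt
  have hLam_eq : Lam p w = fun z => (p-1)⁻¹ * w z + 2⁻¹ * fderiv ℝ w z z := by
    funext z
    rw [Lam, Stmt10Aux.inner_grad]
    ring
  have hai : ∀ z ∈ U, ∀ i : Fin n, HasFDerivAt (fun t => fderiv ℝ w t (EuclideanSpace.single i 1))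
      ((fderiv ℝ (fderiv ℝ w) z).flip (EuclideanSpace.single i 1)) z := fun z hz i => by
    have h := (hA' z hz).clm_apply
      (hasFDerivAt_const (EuclideanSpace.single i 1 : EuclideanSpace ℝ (Fin n)) z)
    simpa using h
  have hbi : ∀ z ∈ U, ∀ i : Fin n,
      HasFDerivAt (fun t => fderiv ℝ (fderiv ℝ w) t (EuclideanSpace.single i 1) t)
      ((fderiv ℝ (fderiv ℝ w) z (EuclideanSpace.single i 1)).comp (ContinuousLinearMap.id ℝ _)
        + ((fderiv ℝ (fderiv ℝ (fderiv ℝ w)) z).flip (EuclideanSpace.single i 1)).flip z) z :=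
    fun z hz i => by
    have h1 : HasFDerivAt (fun t => fderiv ℝ (fderiv ℝ w) t (EuclideanSpace.single i 1))
        ((fderiv ℝ (fderiv ℝ (fderiv ℝ w)) z).flip (EuclideanSpace.single i 1)) z := by
      have h := (hB' z hz).clm_apply
        (hasFDerivAt_const (EuclideanSpace.single i 1 : EuclideanSpace ℝ (Fin n)) z)
      simpa using h
    exact h1.clm_apply (hasFDerivAt_id z)
  have hQ' : ∀ z ∈ U, HasFDerivAt (fun t => w t ^ p) ((p * w z ^ (p-1)) • fderiv ℝ w z) z :=
    fun z hz =>
    (Real.hasDerivAt_rpow_const (p := p) (Or.inl (hpos z hz).ne')).comp_hasFDerivAt z (hw' z hz)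
  have hP1' : ∀ z ∈ U, HasFDerivAt (fun t => w t ^ (p-1))
      (((p-1) * w z ^ (p-2)) • fderiv ℝ w z) z := fun z hz => by
    have h := (Real.hasDerivAt_rpow_const (p := p-1)
      (Or.inl (hpos z hz).ne')).comp_hasFDerivAt z (hw' z hz)
    rw [show p - 1 - 1 = p - 2 by ring] at h; exact h
  have hΛ' : ∀ z ∈ U, HasFDerivAt (Lam p w)
      ((p-1)⁻¹ • fderiv ℝ w z + (2:ℝ)⁻¹ • ((fderiv ℝ w z).comp (ContinuousLinearMap.id ℝ _)
        + (fderiv ℝ (fderiv ℝ w) z).flip z)) z := fun z hz => by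
    rw [hLam_eq]
    exact ((hw' z hz).const_mul ((p-1)⁻¹)).add
      (((hA' z hz).clm_apply (hasFDerivAt_id z)).const_mul (2:ℝ)⁻¹)
  -- rho
  have hnrm : HasFDerivAt (fun z : EuclideanSpace ℝ (Fin n) => -‖z‖ ^ 2 / 4)
      ((-(4:ℝ)⁻¹) • ((2:ℕ) • innerSL ℝ y)) y := by
    have h := ((hasStrictFDerivAt_norm_sq y).hasFDerivAt).const_mul (-(4:ℝ)⁻¹)
    exact h.congr_of_eventuallyEq (Eventually.of_forall fun z => by ring)
  have hρ' : HasFDerivAt (fun z : EuclideanSpace ℝ (Fin n) =>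
      (4 * Real.pi) ^ (-(n:ℝ)/2) * Real.exp (-‖z‖ ^ 2 / 4))
      (((4 * Real.pi) ^ (-(n:ℝ)/2)) • (Real.exp (-‖y‖ ^ 2 / 4) •
        ((-(4:ℝ)⁻¹) • ((2:ℕ) • innerSL ℝ y)))) y := hnrm.exp.const_mul _
  -- pde
  have hpde : ∀ z ∈ U, lap w z = Lam p w z - w z ^ p := by
    intro z hz
    have h0 : Lam p w z = w z / (p - 1) + (1 / 2) * (inner ℝ z (gradient w z) : ℝ) := rfl
    have := heq z hz
    linarith
  have hlapB : ∀ z ∈ U, lap w z = ∑ i, fderiv ℝ (fderiv ℝ w) z (EuclideanSpace.single i 1)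
      (EuclideanSpace.single i 1) := by
    intro z hz
    rw [lap]
    exact Finset.sum_congr rfl fun i _ => by rw [(hai z hz i).fderiv]; simp
  -- symmetry
  have hsymB : ∀ z ∈ U, ∀ u v, fderiv ℝ (fderiv ℝ w) z u v = fderiv ℝ (fderiv ℝ w) z v u := by
    intro z hz u v
    exact second_derivative_symmetric_of_eventually
      (Filter.eventually_of_mem (hU.mem_nhds hz) (fun t ht => hw' t ht)) (hA' z hz) u v
  have hsymC12 : ∀ u v, fderiv ℝ (fderiv ℝ (fderiv ℝ w)) y u v
      = fderiv ℝ (fderiv ℝ (fderiv ℝ w)) y v u := by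
    intro u v
    exact second_derivative_symmetric_of_eventually
      (Filter.eventually_of_mem (hU.mem_nhds hy) (fun t ht => hA' t ht)) (hB' y hy) u v
  have hBd2 : ∀ (u v : EuclideanSpace ℝ (Fin n)),
      HasFDerivAt (fun z => fderiv ℝ (fderiv ℝ w) z u v)
      ((fderiv ℝ (fderiv ℝ w) y u).comp (0 : EuclideanSpace ℝ (Fin n) →L[ℝ] _)
        + ((fderiv ℝ (fderiv ℝ w) y).comp (0 : EuclideanSpace ℝ (Fin n) →L[ℝ] _)
          + (fderiv ℝ (fderiv ℝ (fderiv ℝ w)) y).flip u).flip v) y := by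
    intro u v
    exact ((hB' y hy).clm_apply (hasFDerivAt_const u y)).clm_apply (hasFDerivAt_const v y)
  have hsymC23 : ∀ (ξ u v : EuclideanSpace ℝ (Fin n)),
      fderiv ℝ (fderiv ℝ (fderiv ℝ w)) y ξ u v = fderiv ℝ (fderiv ℝ (fderiv ℝ w)) y ξ v u := by
    intro ξ u v
    have heq2 : (fun z => fderiv ℝ (fderiv ℝ w) z u v)
        =ᶠ[nhds y] (fun z => fderiv ℝ (fderiv ℝ w) z v u) :=
      Filter.eventually_of_mem (hU.mem_nhds hy) fun z hz => hsymB z hz u v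
    have h3 := heq2.fderiv_eq (𝕜 := ℝ)
    rw [(hBd2 u v).fderiv, (hBd2 v u).fderiv] at h3
    have h4 := congrArg (fun L : EuclideanSpace ℝ (Fin n) →L[ℝ] ℝ => L ξ) h3
    simpa using h4
  -- tau derivative on U
  have hτ' : ∀ z ∈ U, HasFDerivAt (fun t => w t ^ p / Lam p w t)
      ((w z ^ p) • ((-(Lam p w z ^ 2)⁻¹) • ((p-1)⁻¹ • fderiv ℝ w z + (2:ℝ)⁻¹ •
          ((fderiv ℝ w z).comp (ContinuousLinearMap.id ℝ _)
            + (fderiv ℝ (fderiv ℝ w) z).flip z)))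
        + (Lam p w z)⁻¹ • ((p * w z ^ (p-1)) • fderiv ℝ w z)) z := by
    intro z hz
    have hinv := (hasDerivAt_inv (hΛ z hz).ne').comp_hasFDerivAt z (hΛ' z hz)
    have hm := (hQ' z hz).mul hinv
    exact hm.congr_of_eventuallyEq (Eventually.of_forall fun t => div_eq_mul_inv _ _)
  -- third derivative trace identity
  have hsum1 : HasFDerivAt (fun z => ∑ i, fderiv ℝ (fderiv ℝ w) z (EuclideanSpace.single i 1)
      (EuclideanSpace.single i 1))
      (∑ i, ((fderiv ℝ (fderiv ℝ w) y (EuclideanSpace.single i 1)).comp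
          (0 : EuclideanSpace ℝ (Fin n) →L[ℝ] _)
        + ((fderiv ℝ (fderiv ℝ w) y).comp (0 : EuclideanSpace ℝ (Fin n) →L[ℝ] _)
          + (fderiv ℝ (fderiv ℝ (fderiv ℝ w)) y).flip (EuclideanSpace.single i 1)).flip
            (EuclideanSpace.single i 1))) y :=
    HasFDerivAt.fun_sum (fun i _ => hBd2 _ _)
  have hev1 : (fun z => ∑ i, fderiv ℝ (fderiv ℝ w) z (EuclideanSpace.single i 1)
      (EuclideanSpace.single i 1)) =ᶠ[nhds y] (fun z => Lam p w z - w z ^ p) :=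
    Filter.eventually_of_mem (hU.mem_nhds hy) fun z hz => (hlapB z hz).symm.trans (hpde z hz)
  have hd2 : HasFDerivAt (fun z => Lam p w z - w z ^ p)
      (((p-1)⁻¹ • fderiv ℝ w y + (2:ℝ)⁻¹ • ((fderiv ℝ w y).comp (ContinuousLinearMap.id ℝ _)
        + (fderiv ℝ (fderiv ℝ w) y).flip y)) - (p * w y ^ (p-1)) • fderiv ℝ w y) y :=
    (hΛ' y hy).sub (hQ' y hy)
  have hCsum : ∀ v : EuclideanSpace ℝ (Fin n),
      ∑ i, fderiv ℝ (fderiv ℝ (fderiv ℝ w)) y v (EuclideanSpace.single i 1)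
        (EuclideanSpace.single i 1)
      = ((p-1)⁻¹ * fderiv ℝ w y v + 2⁻¹ * (fderiv ℝ w y v + fderiv ℝ (fderiv ℝ w) y v y))
        - p * w y ^ (p-1) * fderiv ℝ w y v := by
    intro v
    have hDeq := hev1.fderiv_eq (𝕜 := ℝ)
    rw [hsum1.fderiv, hd2.fderiv] at hDeq
    have h4 := DFunLike.congr_fun hDeq v
    simp only [ContinuousLinearMap.sum_apply, ContinuousLinearMap.add_apply,
      ContinuousLinearMap.sub_apply, ContinuousLinearMap.coe_comp', Function.comp_apply,
      ContinuousLinearMap.zero_apply, map_zero, zero_add, ContinuousLinearMap.flip_apply,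
      ContinuousLinearMap.smul_apply, ContinuousLinearMap.coe_id', id_eq,
      smul_eq_mul] at h4
    linarith [h4]
  have hSc : ∑ i, fderiv ℝ (fderiv ℝ (fderiv ℝ w)) y (EuclideanSpace.single i 1)
      (EuclideanSpace.single i 1) y
      = ((p-1)⁻¹ * fderiv ℝ w y y + 2⁻¹ * (fderiv ℝ w y y + fderiv ℝ (fderiv ℝ w) y y y))
        - p * w y ^ (p-1) * fderiv ℝ w y y := by
    have e1 : ∀ i : Fin n, fderiv ℝ (fderiv ℝ (fderiv ℝ w)) y (EuclideanSpace.single i 1)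
        (EuclideanSpace.single i 1) y
        = ∑ j, y j * fderiv ℝ (fderiv ℝ (fderiv ℝ w)) y (EuclideanSpace.single j 1)
            (EuclideanSpace.single i 1) (EuclideanSpace.single i 1) := by
      intro i
      rw [Stmt10Aux.clm_sum (fderiv ℝ (fderiv ℝ (fderiv ℝ w)) y (EuclideanSpace.single i 1)
        (EuclideanSpace.single i 1)) y]
      refine Finset.sum_congr rfl fun j _ => ?_
      rw [hsymC23 (EuclideanSpace.single i 1) (EuclideanSpace.single i 1)
        (EuclideanSpace.single j 1)]
      rw [congrArg (fun L : EuclideanSpace ℝ (Fin n) →L[ℝ] ℝ => L (EuclideanSpace.single i 1))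
        (hsymC12 (EuclideanSpace.single i 1) (EuclideanSpace.single j 1))]
    calc ∑ i, fderiv ℝ (fderiv ℝ (fderiv ℝ w)) y (EuclideanSpace.single i 1)
          (EuclideanSpace.single i 1) y
        = ∑ i, ∑ j, y j * fderiv ℝ (fderiv ℝ (fderiv ℝ w)) y (EuclideanSpace.single j 1)
            (EuclideanSpace.single i 1) (EuclideanSpace.single i 1) :=
          Finset.sum_congr rfl fun i _ => e1 i
      _ = ∑ j, y j * ∑ i, fderiv ℝ (fderiv ℝ (fderiv ℝ w)) y (EuclideanSpace.single j 1)
            (EuclideanSpace.single i 1) (EuclideanSpace.single i 1) := by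
          rw [Finset.sum_comm]
          exact Finset.sum_congr rfl fun j _ => (Finset.mul_sum _ _ _).symm
      _ = ∑ j, y j * (((p-1)⁻¹ * fderiv ℝ w y (EuclideanSpace.single j 1)
            + 2⁻¹ * (fderiv ℝ w y (EuclideanSpace.single j 1)
              + fderiv ℝ (fderiv ℝ w) y (EuclideanSpace.single j 1) y))
            - p * w y ^ (p-1) * fderiv ℝ w y (EuclideanSpace.single j 1)) :=
          Finset.sum_congr rfl fun j _ => by rw [hCsum]
      _ = ((p-1)⁻¹ * fderiv ℝ w y y + 2⁻¹ * (fderiv ℝ w y y + fderiv ℝ (fderiv ℝ w) y y y))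
          - p * w y ^ (p-1) * fderiv ℝ w y y := by
          have SA : fderiv ℝ w y y = ∑ j, y j * fderiv ℝ w y (EuclideanSpace.single j 1) :=
            Stmt10Aux.clm_sum _ y
          have SB : fderiv ℝ (fderiv ℝ w) y y y
              = ∑ j, y j * fderiv ℝ (fderiv ℝ w) y (EuclideanSpace.single j 1) y := by
            have h := Stmt10Aux.clm_sum ((fderiv ℝ (fderiv ℝ w) y).flip y) y
            simpa using h
          rw [SA, SB]
          simp only [Finset.mul_sum, ← Finset.sum_add_distrib, ← Finset.sum_sub_distrib]
          exact Finset.sum_congr rfl fun j _ => by ring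
  -- component functions agree with explicit form on U
  have hFeq : ∀ i : Fin n, (fun z => ((Lam p w z ^ 2 *
        ((4 * Real.pi) ^ (-(n:ℝ) / 2) * Real.exp (-‖z‖ ^ 2 / 4))) •
        gradient (fun z' => w z' ^ p / Lam p w z') z) i) =ᶠ[nhds y]
      (fun z => ((4 * Real.pi) ^ (-(n:ℝ) / 2) * Real.exp (-‖z‖ ^ 2 / 4)) *
        (Lam p w z * (p * w z ^ (p-1) * fderiv ℝ w z (EuclideanSpace.single i 1))
          - w z ^ p * ((p-1)⁻¹ * fderiv ℝ w z (EuclideanSpace.single i 1)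
            + 2⁻¹ * (fderiv ℝ w z (EuclideanSpace.single i 1)
              + fderiv ℝ (fderiv ℝ w) z (EuclideanSpace.single i 1) z)))) := by
    intro i
    refine Filter.eventually_of_mem (hU.mem_nhds hy) fun z hz => ?_
    beta_reduce
    have h1 : ((Lam p w z ^ 2 * ((4 * Real.pi) ^ (-(n:ℝ) / 2) * Real.exp (-‖z‖ ^ 2 / 4))) •
        gradient (fun z' => w z' ^ p / Lam p w z') z) i
        = (Lam p w z ^ 2 * ((4 * Real.pi) ^ (-(n:ℝ) / 2) * Real.exp (-‖z‖ ^ 2 / 4))) *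
          gradient (fun z' => w z' ^ p / Lam p w z') z i := rfl
    rw [h1, Stmt10Aux.grad_apply, (hτ' z hz).fderiv]
    simp only [ContinuousLinearMap.add_apply, ContinuousLinearMap.smul_apply,
      ContinuousLinearMap.coe_comp', Function.comp_apply, ContinuousLinearMap.coe_id', id_eq,
      ContinuousLinearMap.flip_apply, smul_eq_mul]
    have hLz := (hΛ z hz).ne'
    field_simp
    ring
  -- the i-th summand value
  have hEi : ∀ i : Fin n, fderiv ℝ (fun z => ((Lam p w z ^ 2 *
        ((4 * Real.pi) ^ (-(n:ℝ) / 2) * Real.exp (-‖z‖ ^ 2 / 4))) •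
        gradient (fun z' => w z' ^ p / Lam p w z') z) i) y (EuclideanSpace.single i 1)
      = ((4 * Real.pi) ^ (-(n:ℝ) / 2) * Real.exp (-‖y‖ ^ 2 / 4)) * ((-(2⁻¹) * y i) *
          (Lam p w y * (p * w y ^ (p-1) * fderiv ℝ w y (EuclideanSpace.single i 1))
            - w y ^ p * ((p-1)⁻¹ * fderiv ℝ w y (EuclideanSpace.single i 1)
              + 2⁻¹ * (fderiv ℝ w y (EuclideanSpace.single i 1)
                + fderiv ℝ (fderiv ℝ w) y (EuclideanSpace.single i 1) y)))
        + (Lam p w y * ((p * w y ^ (p-1)) *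
              fderiv ℝ (fderiv ℝ w) y (EuclideanSpace.single i 1) (EuclideanSpace.single i 1)
            + fderiv ℝ w y (EuclideanSpace.single i 1) *
              (p * ((p-1) * w y ^ (p-2) * fderiv ℝ w y (EuclideanSpace.single i 1))))
          - w y ^ p * ((p-1)⁻¹ *
              fderiv ℝ (fderiv ℝ w) y (EuclideanSpace.single i 1) (EuclideanSpace.single i 1)
            + 2⁻¹ * (2 * fderiv ℝ (fderiv ℝ w) y (EuclideanSpace.single i 1)
                (EuclideanSpace.single i 1)
              + fderiv ℝ (fderiv ℝ (fderiv ℝ w)) y (EuclideanSpace.single i 1)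
                (EuclideanSpace.single i 1) y)))) := by
    intro i
    have hX := ((hΛ' y hy).mul (((hP1' y hy).const_mul p).mul (hai y hy i))).sub
      ((hQ' y hy).mul (((hai y hy i).const_mul ((p-1)⁻¹)).add
        (((hai y hy i).add (hbi y hy i)).const_mul (2:ℝ)⁻¹)))
    have hGd := hρ'.mul hX
    have hF := hGd.congr_of_eventuallyEq (hFeq i)
    rw [hF.fderiv]
    simp only [ContinuousLinearMap.add_apply, ContinuousLinearMap.sub_apply,
      ContinuousLinearMap.smul_apply, ContinuousLinearMap.coe_comp', Function.comp_apply,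
      ContinuousLinearMap.coe_id', id_eq, ContinuousLinearMap.flip_apply, smul_eq_mul,
      ContinuousLinearMap.coe_smul', Pi.smul_apply, innerSL_apply_apply, nsmul_eq_mul,
      Nat.cast_ofNat, Stmt10Aux.inner_single, Pi.mul_apply, Pi.add_apply, Pi.sub_apply]
    ring
  -- assemble
  have hp1 : p - 1 ≠ 0 := sub_ne_zero.2 (ne_of_gt hp)
  have hAyy : fderiv ℝ w y y = 2 * Lam p w y - 2 * (p-1)⁻¹ * w y := by
    have h := congrFun hLam_eq y
    beta_reduce at h
    linarith
  have hPW : w y ^ (p-1) * w y = w y ^ p := by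
    rw [← Real.rpow_add_one (hpos y hy).ne' (p-1)]
    norm_num
  have hS : ∑ i, fderiv ℝ w y (EuclideanSpace.single i 1) *
      fderiv ℝ w y (EuclideanSpace.single i 1) = ‖gradient w y‖ ^ 2 :=
    (Stmt10Aux.norm_sq_grad w y).symm
  have hbbsum : ∑ i, fderiv ℝ (fderiv ℝ w) y (EuclideanSpace.single i 1)
      (EuclideanSpace.single i 1) = Lam p w y - w y ^ p := (hlapB y hy).symm.trans (hpde y hy)
  have hSA : ∑ i, y i * fderiv ℝ w y (EuclideanSpace.single i 1) = fderiv ℝ w y y :=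
    (Stmt10Aux.clm_sum _ y).symm
  have hSBy : ∑ i, y i * fderiv ℝ (fderiv ℝ w) y (EuclideanSpace.single i 1) y
      = fderiv ℝ (fderiv ℝ w) y y y := by
    have h := Stmt10Aux.clm_sum ((fderiv ℝ (fderiv ℝ w) y).flip y) y
    simpa using h.symm
  calc dvg (fun z =>
        ((Lam p w z) ^ 2 * ((4 * Real.pi) ^ (-(n : ℝ) / 2) * Real.exp (-‖z‖ ^ 2 / 4))) •
          gradient (fun z' => w z' ^ p / Lam p w z') z) y
      = ∑ i, fderiv ℝ (fun z => ((Lam p w z ^ 2 *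
          ((4 * Real.pi) ^ (-(n:ℝ) / 2) * Real.exp (-‖z‖ ^ 2 / 4))) •
          gradient (fun z' => w z' ^ p / Lam p w z') z) i) y (EuclideanSpace.single i 1) := rfl
    _ = ∑ i,
        (((4 * Real.pi) ^ (-(n:ℝ) / 2) * Real.exp (-‖y‖ ^ 2 / 4)) * (-(2⁻¹)) *
            (Lam p w y * (p * w y ^ (p-1)) - w y ^ p * ((p-1)⁻¹ + 2⁻¹)) *
            (y i * fderiv ℝ w y (EuclideanSpace.single i 1))
          + ((4 * Real.pi) ^ (-(n:ℝ) / 2) * Real.exp (-‖y‖ ^ 2 / 4)) * 2⁻¹ * 2⁻¹ * w y ^ p *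
            (y i * fderiv ℝ (fderiv ℝ w) y (EuclideanSpace.single i 1) y)
          + ((4 * Real.pi) ^ (-(n:ℝ) / 2) * Real.exp (-‖y‖ ^ 2 / 4)) *
            (Lam p w y * (p * w y ^ (p-1)) - w y ^ p * ((p-1)⁻¹ + 1)) *
            (fderiv ℝ (fderiv ℝ w) y (EuclideanSpace.single i 1) (EuclideanSpace.single i 1))
          + ((4 * Real.pi) ^ (-(n:ℝ) / 2) * Real.exp (-‖y‖ ^ 2 / 4)) *
            (Lam p w y * (p * ((p-1) * w y ^ (p-2)))) *
            (fderiv ℝ w y (EuclideanSpace.single i 1) *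
              fderiv ℝ w y (EuclideanSpace.single i 1))
          + (-(((4 * Real.pi) ^ (-(n:ℝ) / 2) * Real.exp (-‖y‖ ^ 2 / 4)) * w y ^ p * 2⁻¹)) *
            (fderiv ℝ (fderiv ℝ (fderiv ℝ w)) y (EuclideanSpace.single i 1)
              (EuclideanSpace.single i 1) y)) := by
        refine Finset.sum_congr rfl fun i _ => ?_
        rw [hEi i]
        ring
    _ = ((4 * Real.pi) ^ (-(n:ℝ) / 2) * Real.exp (-‖y‖ ^ 2 / 4)) * (-(2⁻¹)) *
            (Lam p w y * (p * w y ^ (p-1)) - w y ^ p * ((p-1)⁻¹ + 2⁻¹)) *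
            (∑ i, y i * fderiv ℝ w y (EuclideanSpace.single i 1))
          + ((4 * Real.pi) ^ (-(n:ℝ) / 2) * Real.exp (-‖y‖ ^ 2 / 4)) * 2⁻¹ * 2⁻¹ * w y ^ p *
            (∑ i, y i * fderiv ℝ (fderiv ℝ w) y (EuclideanSpace.single i 1) y)
          + ((4 * Real.pi) ^ (-(n:ℝ) / 2) * Real.exp (-‖y‖ ^ 2 / 4)) *
            (Lam p w y * (p * w y ^ (p-1)) - w y ^ p * ((p-1)⁻¹ + 1)) *
            (∑ i, fderiv ℝ (fderiv ℝ w) y (EuclideanSpace.single i 1) (EuclideanSpace.single i 1))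
          + ((4 * Real.pi) ^ (-(n:ℝ) / 2) * Real.exp (-‖y‖ ^ 2 / 4)) *
            (Lam p w y * (p * ((p-1) * w y ^ (p-2)))) *
            (∑ i, fderiv ℝ w y (EuclideanSpace.single i 1) *
              fderiv ℝ w y (EuclideanSpace.single i 1))
          + (-(((4 * Real.pi) ^ (-(n:ℝ) / 2) * Real.exp (-‖y‖ ^ 2 / 4)) * w y ^ p * 2⁻¹)) *
            (∑ i, fderiv ℝ (fderiv ℝ (fderiv ℝ w)) y (EuclideanSpace.single i 1)
              (EuclideanSpace.single i 1) y) := by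
        simp only [Finset.sum_add_distrib, ← Finset.mul_sum]
    _ = p * (p - 1) * w y ^ (p - 2) * ‖gradient w y‖ ^ 2 * Lam p w y *
          ((4 * Real.pi) ^ (-(n : ℝ) / 2) * Real.exp (-‖y‖ ^ 2 / 4)) := by
        rw [hS, hbbsum, hSA, hSBy, hSc, hAyy, ← hPW]
        field_simp
        ring
end

section
/- Caccioppoli-type estimate: let ρ > 0 be smooth, V > 0 smooth, and τ smooth on B_R satisfying div(V²ρ ∇τ²) ≥ 2|∇τ|² V²ρ + 2τ g V²ρ pointwise with g ≥ 0 whenever τ ≥ 0. Then for any φ ∈ C_c^∞(B_R), ∫ φ² (|∇τ|² + τ g) V² ρ ≤ C ∫ τ² |∇φ|² V² ρ for a universal constant C. -/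
open Metric MeasureTheory InnerProductSpace

variable {n : ℕ}

local notation "E" => EuclideanSpace ℝ (Fin n)


lemma clm_decomp (L : E →L[ℝ] ℝ) (v : E) :
    L v = ∑ i, v i * L (EuclideanSpace.single i 1) := by
  have h : v = ∑ i, v i • EuclideanSpace.single i 1 := by
    have := (EuclideanSpace.basisFun (Fin n) ℝ).sum_repr v
    simpa [EuclideanSpace.basisFun_apply, EuclideanSpace.basisFun_repr] using this.symm
  conv_lhs => rw [h]
  simp [map_sum, smul_eq_mul]

lemma contDiff_gradient {f : E → ℝ} (hf : ContDiff ℝ (⊤ : ℕ∞) f) :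
    ContDiff ℝ (⊤ : ℕ∞) (gradient f) := by
  have h1 : ContDiff ℝ (⊤ : ℕ∞) (fderiv ℝ f) := hf.fderiv_right (by simp)
  exact ((toDual ℝ E).symm.contDiff).comp h1

lemma contDiff_comp_proj {F : E → E} (hF : ContDiff ℝ (⊤ : ℕ∞) F) (i : Fin n) :
    ContDiff ℝ (⊤ : ℕ∞) (fun y => F y i) :=
  (EuclideanSpace.proj (𝕜 := ℝ) i).contDiff.comp hF

lemma continuous_dvg {F : E → E} (hF : ContDiff ℝ (⊤ : ℕ∞) F) : Continuous (dvg F) := by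
  refine continuous_finset_sum _ fun i _ => ?_
  have h1 : ContDiff ℝ (⊤ : ℕ∞) (fderiv ℝ (fun y => F y i)) :=
    (contDiff_comp_proj hF i).fderiv_right (by simp)
  exact h1.continuous.clm_apply continuous_const

lemma integrableOn_ball {f : E → ℝ} (hf : Continuous f) (R : ℝ) :
    IntegrableOn f (ball (0 : E) R) volume :=
  (hf.continuousOn.integrableOn_compact (isCompact_closedBall 0 R)).mono_set
    ball_subset_closedBall

lemma fderiv_sq {f : E → ℝ} (hf : ContDiff ℝ (⊤ : ℕ∞) f) (x : E) :
    fderiv ℝ (fun z => f z ^ 2) x = (2 * f x) • fderiv ℝ f x := by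
  have hd : DifferentiableAt ℝ f x := (hf.differentiable (by simp)) x
  have : (fun z => f z ^ 2) = fun z => f z * f z := by funext z; ring
  rw [this, fderiv_fun_mul hd hd, ← two_smul ℝ, smul_smul]


lemma gradient_sq {f : E → ℝ} (hf : ContDiff ℝ (⊤ : ℕ∞) f) (x : E) :
    gradient (fun z => f z ^ 2) x = (2 * f x) • gradient f x := by
  show (toDual ℝ E).symm (fderiv ℝ (fun z => f z ^ 2) x) = _
  rw [fderiv_sq hf x, _root_.map_smul]
  rfl

lemma fderiv_apply_eq_inner {f : E → ℝ} (x v : E) :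
    fderiv ℝ f x v = inner ℝ (gradient f x) v := by
  rw [show gradient f x = (toDual ℝ E).symm (fderiv ℝ f x) from rfl,
    InnerProductSpace.toDual_symm_apply]

/-- Product rule for divergence. -/
lemma dvg_smul_mul (a b : E → ℝ) (G : E → E)
    (ha : ContDiff ℝ (⊤ : ℕ∞) a) (hb : ContDiff ℝ (⊤ : ℕ∞) b) (hG : ContDiff ℝ (⊤ : ℕ∞) G) (x : E) :
    dvg (fun y => (a y * b y) • G y) x
      = b x * dvg (fun y => a y • G y) x + a x * fderiv ℝ b x (G x) := by
  have hax : DifferentiableAt ℝ a x := (ha.differentiable (by simp)) x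
  have hbx : DifferentiableAt ℝ b x := (hb.differentiable (by simp)) x
  have habx : DifferentiableAt ℝ (fun y => a y * b y) x := hax.mul hbx
  have hGi : ∀ i, DifferentiableAt ℝ (fun y => G y i) x := fun i =>
    ((contDiff_comp_proj hG i).differentiable (by simp)) x
  have hcomp1 : ∀ i, (fun y => ((a y * b y) • G y) i) = fun y => (a y * b y) * G y i := by
    intro i; funext y; simp
  have hcomp2 : ∀ i, (fun y => (a y • G y) i) = fun y => a y * G y i := by
    intro i; funext y; simp
  unfold dvg
  simp only [hcomp1, hcomp2]
  have e1 : ∀ i : Fin n, fderiv ℝ (fun y => (a y * b y) * G y i) x (EuclideanSpace.single i 1)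
      = (a x * b x) * fderiv ℝ (fun y => G y i) x (EuclideanSpace.single i 1)
        + G x i * ((a x * fderiv ℝ b x (EuclideanSpace.single i 1))
          + b x * fderiv ℝ a x (EuclideanSpace.single i 1)) := by
    intro i
    rw [fderiv_fun_mul habx (hGi i), fderiv_fun_mul hax hbx]
    simp [mul_add]
  have e2 : ∀ i : Fin n, fderiv ℝ (fun y => a y * G y i) x (EuclideanSpace.single i 1)
      = a x * fderiv ℝ (fun y => G y i) x (EuclideanSpace.single i 1)
        + G x i * fderiv ℝ a x (EuclideanSpace.single i 1) := by
    intro i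
    rw [fderiv_fun_mul hax (hGi i)]
    simp
  rw [clm_decomp (fderiv ℝ b x) (G x)]
  simp only [e1, e2]
  rw [Finset.mul_sum, Finset.mul_sum, ← Finset.sum_add_distrib]
  exact Finset.sum_congr rfl fun i _ => by ring

/-- Weighted Caccioppoli estimate: there is a universal constant C such that if ρ, V > 0 are
smooth, τ ≥ 0 is smooth with div(V²ρ ∇τ²) ≥ 2|∇τ|² V²ρ + 2τg V²ρ on B_R with g ≥ 0, and the
divergence of V²ρφ²∇τ² integrates to zero for φ ∈ C_c^∞(B_R), then
∫ φ²(|∇τ|² + τg) V²ρ ≤ C ∫ τ²|∇φ|² V²ρ. -/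
theorem stmt12 :
    ∃ C : ℝ, 0 < C ∧ ∀ (n : ℕ) (R : ℝ) (ρ V τ g φ : EuclideanSpace ℝ (Fin n) → ℝ),
      ContDiff ℝ (⊤ : ℕ∞) ρ → (∀ x, 0 < ρ x) →
      ContDiff ℝ (⊤ : ℕ∞) V → (∀ x, 0 < V x) →
      ContDiff ℝ (⊤ : ℕ∞) τ → (∀ x, 0 ≤ τ x) →
      Continuous g → (∀ x, 0 ≤ g x) →
      (∀ x ∈ Metric.ball (0 : EuclideanSpace ℝ (Fin n)) R,
        2 * ‖gradient τ x‖ ^ 2 * V x ^ 2 * ρ x + 2 * τ x * g x * V x ^ 2 * ρ x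
          ≤ dvg (fun y => (V y ^ 2 * ρ y) • gradient (fun z => τ z ^ 2) y) x) →
      ContDiff ℝ (⊤ : ℕ∞) φ → HasCompactSupport φ →
      tsupport φ ⊆ Metric.ball (0 : EuclideanSpace ℝ (Fin n)) R →
      (∫ x in Metric.ball (0 : EuclideanSpace ℝ (Fin n)) R,
          dvg (fun y => (V y ^ 2 * ρ y * φ y ^ 2) • gradient (fun z => τ z ^ 2) y) x) = 0 →
      (∫ x in Metric.ball (0 : EuclideanSpace ℝ (Fin n)) R,
          φ x ^ 2 * (‖gradient τ x‖ ^ 2 + τ x * g x) * V x ^ 2 * ρ x)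
        ≤ C * ∫ x in Metric.ball (0 : EuclideanSpace ℝ (Fin n)) R,
            τ x ^ 2 * ‖gradient φ x‖ ^ 2 * V x ^ 2 * ρ x := by
  refine ⟨4, by norm_num, ?_⟩
  intro n R ρ V τ g φ hρ hρpos hV hVpos hτ hτnn hg hgnn hineq hφ hφc hφsupp hzero
  have ha : ContDiff ℝ (⊤ : ℕ∞) (fun y => V y ^ 2 * ρ y) := (hV.pow 2).mul hρ
  have hb : ContDiff ℝ (⊤ : ℕ∞) (fun y => φ y ^ 2) := hφ.pow 2
  have hτ2 : ContDiff ℝ (⊤ : ℕ∞) (fun z : EuclideanSpace ℝ (Fin n) => τ z ^ 2) := hτ.pow 2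
  have hG : ContDiff ℝ (⊤ : ℕ∞) (gradient (fun z => τ z ^ 2)) := contDiff_gradient hτ2
  have hgradτ : ContDiff ℝ (⊤ : ℕ∞) (gradient τ) := contDiff_gradient hτ
  have hgradφ : ContDiff ℝ (⊤ : ℕ∞) (gradient φ) := contDiff_gradient hφ
  set B := Metric.ball (0 : EuclideanSpace ℝ (Fin n)) R with hBdef
  set Q : EuclideanSpace ℝ (Fin n) → ℝ :=
    dvg (fun y => (V y ^ 2 * ρ y) • gradient (fun z => τ z ^ 2) y) with hQdef
  set K : EuclideanSpace ℝ (Fin n) → ℝ := fun x =>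
    V x ^ 2 * ρ x * (4 * φ x * τ x * inner ℝ (gradient φ x) (gradient τ x)) with hKdef
  set L : EuclideanSpace ℝ (Fin n) → ℝ := fun x =>
    φ x ^ 2 * (‖gradient τ x‖ ^ 2 + τ x * g x) * V x ^ 2 * ρ x with hLdef
  set J : EuclideanSpace ℝ (Fin n) → ℝ := fun x =>
    τ x ^ 2 * ‖gradient φ x‖ ^ 2 * V x ^ 2 * ρ x with hJdef
  -- pointwise decomposition of the big divergence
  have hKval : ∀ x, fderiv ℝ (fun y => φ y ^ 2) x (gradient (fun z => τ z ^ 2) x)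
      = 4 * φ x * τ x * inner ℝ (gradient φ x) (gradient τ x) := by
    intro x
    rw [fderiv_sq hφ x, gradient_sq hτ x, ContinuousLinearMap.smul_apply, smul_eq_mul,
      (fderiv ℝ φ x).map_smul, smul_eq_mul, fderiv_apply_eq_inner]
    ring
  have key : (fun x => dvg (fun y => (V y ^ 2 * ρ y * φ y ^ 2) •
      gradient (fun z => τ z ^ 2) y) x) = fun x => φ x ^ 2 * Q x + K x := by
    funext x
    have h := dvg_smul_mul (fun y => V y ^ 2 * ρ y) (fun y => φ y ^ 2)
      (gradient (fun z => τ z ^ 2)) ha hb hG x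
    rw [h, hKval x]
  -- continuity and integrability
  have cQ : Continuous Q := continuous_dvg (ha.smul hG)
  have cQb : Continuous (fun x => φ x ^ 2 * Q x) :=
    ((hφ.continuous).pow 2).mul cQ
  have cK : Continuous K := by
    apply Continuous.mul
    · exact ((hV.continuous.pow 2).mul hρ.continuous)
    · exact (((continuous_const.mul hφ.continuous).mul hτ.continuous).mul
        (hgradφ.continuous.inner hgradτ.continuous))
  have cL : Continuous L :=
    (((hφ.continuous.pow 2).mul ((hgradτ.continuous.norm.pow 2).add
      (hτ.continuous.mul hg))).mul (hV.continuous.pow 2)).mul hρ.continuous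
  have cJ : Continuous J :=
    (((hτ.continuous.pow 2).mul (hgradφ.continuous.norm.pow 2)).mul
      (hV.continuous.pow 2)).mul hρ.continuous
  have iQb : IntegrableOn (fun x => φ x ^ 2 * Q x) B := integrableOn_ball cQb R
  have iK : IntegrableOn K B := integrableOn_ball cK R
  have iL : IntegrableOn L B := integrableOn_ball cL R
  have iJ : IntegrableOn J B := integrableOn_ball cJ R
  have i2L : IntegrableOn (fun x => 2 * L x) B := iL.const_mul 2
  have iLJ : IntegrableOn (fun x => L x + 4 * J x) B := iL.add (iJ.const_mul 4)
  -- the integral identity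
  rw [key] at hzero
  rw [integral_add iQb iK] at hzero
  -- step 1 : 2 ∫ L ≤ ∫ φ² Q
  have step1 : ∫ x in B, 2 * L x ≤ ∫ x in B, φ x ^ 2 * Q x := by
    refine setIntegral_mono_on i2L iQb measurableSet_ball fun x hx => ?_
    have h := mul_le_mul_of_nonneg_left (hineq x hx) (sq_nonneg (φ x))
    calc 2 * L x = φ x ^ 2 * (2 * ‖gradient τ x‖ ^ 2 * V x ^ 2 * ρ x
          + 2 * τ x * g x * V x ^ 2 * ρ x) := by rw [hLdef]; ring
      _ ≤ φ x ^ 2 * Q x := h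
  -- step 2 : -∫ K ≤ ∫ (L + 4 J)
  have step2 : ∫ x in B, (-K x) ≤ ∫ x in B, (L x + 4 * J x) := by
    refine setIntegral_mono_on iK.neg iLJ measurableSet_ball fun x hx => ?_
    have hA : (0:ℝ) < V x ^ 2 * ρ x := mul_pos (pow_pos (hVpos x) 2) (hρpos x)
    set ip : ℝ := inner ℝ (gradient φ x) (gradient τ x) with hipdef
    have hip : |ip| ≤ ‖gradient φ x‖ * ‖gradient τ x‖ := abs_real_inner_le_norm _ _
    set p := ‖gradient φ x‖ with hp
    set t := ‖gradient τ x‖ with ht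
    have hpn : 0 ≤ p := norm_nonneg _
    have htn : 0 ≤ t := norm_nonneg _
    have h1 : -(4 * φ x * τ x * ip) ≤ 4 * τ x * (|φ x| * (p * t)) := by
      have h0 : -(φ x * ip) ≤ |φ x| * (p * t) := by
        calc -(φ x * ip) ≤ |φ x * ip| := neg_le_abs _
          _ = |φ x| * |ip| := abs_mul _ _
          _ ≤ |φ x| * (p * t) := mul_le_mul_of_nonneg_left hip (abs_nonneg _)
      nlinarith [hτnn x]
    have h2 : 4 * τ x * (|φ x| * (p * t)) ≤ φ x ^ 2 * t ^ 2 + 4 * (τ x ^ 2 * p ^ 2) := by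
      nlinarith [sq_nonneg (|φ x| * t - 2 * τ x * p), sq_abs (φ x), hτnn x]
    have h3 : -(K x) = (V x ^ 2 * ρ x) * (-(4 * φ x * τ x * ip)) := by
      rw [hKdef]; ring
    have h4 : (V x ^ 2 * ρ x) * (-(4 * φ x * τ x * ip))
        ≤ (V x ^ 2 * ρ x) * (φ x ^ 2 * t ^ 2 + 4 * (τ x ^ 2 * p ^ 2)) :=
      mul_le_mul_of_nonneg_left (h1.trans h2) hA.le
    have h5 : (V x ^ 2 * ρ x) * (φ x ^ 2 * t ^ 2 + 4 * (τ x ^ 2 * p ^ 2))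
        ≤ L x + 4 * J x := by
      have hnn : 0 ≤ φ x ^ 2 * (τ x * g x) * V x ^ 2 * ρ x :=
        mul_nonneg (mul_nonneg (mul_nonneg (sq_nonneg (φ x))
          (mul_nonneg (hτnn x) (hgnn x))) (sq_nonneg (V x))) (hρpos x).le
      simp only [hLdef, hJdef, ← hp, ← ht]
      nlinarith [hnn]
    linarith [h3 ▸ h4.trans h5]
  -- put everything together
  rw [integral_neg, integral_add iL (iJ.const_mul 4), integral_const_mul] at step2
  rw [integral_const_mul] at step1
  show ∫ x in B, L x ≤ 4 * ∫ x in B, J x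
  linarith
end

section
/- If w : ℝ → ℝ is a bounded solution of w' = -w/(p-1) + |w|^{p-1}w on ℝ (p > 1), then either w ≡ 0, w ≡ κ, w ≡ -κ, or w(s) = ±κ(1 + e^{s-s₀})^{-1/(p-1)} for some s₀ ∈ ℝ. -/
open Real Set

private lemma fwd_zero {w f : ℝ → ℝ} {K a b : ℝ} (hab : a ≤ b)
    (hd : ∀ s, HasDerivAt w (f s) s) (hb : ∀ s, |f s| ≤ K * |w s|)
    (h0 : w a = 0) : w b = 0 := by
  have hc : ContinuousOn w (Icc a b) :=
    (fun s _ => ((hd s).differentiableAt.continuousAt).continuousWithinAt)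
  have key := norm_le_gronwallBound_of_norm_deriv_right_le (δ := 0) (K := K) (ε := 0)
    hc (fun x _ => (hd x).hasDerivWithinAt)
    (by simp [Real.norm_eq_abs, h0])
    (fun x _ => by simpa [Real.norm_eq_abs] using hb x)
    b ⟨hab, le_refl b⟩
  rw [gronwallBound_ε0] at key
  simp only [Real.norm_eq_abs, zero_mul] at key
  exact abs_eq_zero.mp (le_antisymm key (abs_nonneg _))

private lemma all_zero {w f : ℝ → ℝ} {K s₁ : ℝ}
    (hd : ∀ s, HasDerivAt w (f s) s) (hb : ∀ s, |f s| ≤ K * |w s|)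
    (h0 : w s₁ = 0) : ∀ s, w s = 0 := by
  intro s
  rcases le_total s₁ s with h | h
  · exact fwd_zero h hd hb h0
  · set g : ℝ → ℝ := fun t => w (2 * s₁ - t) with hg
    have hdg : ∀ t, HasDerivAt g (f (2 * s₁ - t) * (-1)) t := by
      intro t
      exact (hd (2 * s₁ - t)).comp t (((hasDerivAt_id t).const_sub (2 * s₁)))
    have hbg : ∀ t, |f (2 * s₁ - t) * (-1)| ≤ K * |g t| := by
      intro t; simpa using hb (2 * s₁ - t)
    have h0g : g s₁ = 0 := by simp [hg, two_mul, h0]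
    have := fwd_zero (a := s₁) (b := 2 * s₁ - s) (by linarith) hdg hbg h0g
    simpa [hg] using this

private lemma pos_all {w : ℝ → ℝ} (hc : Continuous w) (hne : ∀ s, w s ≠ 0)
    (h0 : 0 < w 0) : ∀ s, 0 < w s := by
  intro s
  by_contra h
  push_neg at h
  have hneg : w s < 0 := lt_of_le_of_ne h (hne s)
  have hmem : (0 : ℝ) ∈ uIcc (w 0) (w s) := by
    rw [Set.mem_uIcc]; right; exact ⟨hneg.le, h0.le⟩
  obtain ⟨t, _, ht⟩ := intermediate_value_uIcc (hc.continuousOn) hmem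
  exact hne t ht

private lemma pos_case (p : ℝ) (hp : 1 < p) (w : ℝ → ℝ)
    (heq : ∀ s : ℝ, HasDerivAt w (-(w s) / (p - 1) + |w s| ^ (p - 1) * w s) s)
    (hpos : ∀ s, 0 < w s) :
    (∀ s, w s = (p - 1) ^ (-(1 / (p - 1)))) ∨
      (∃ s₀ : ℝ, ∀ s,
        w s = (p - 1) ^ (-(1 / (p - 1))) * (1 + Real.exp (s - s₀)) ^ (-(1 / (p - 1)))) := by
  set q := p - 1 with hqdef
  have hq : 0 < q := by simp only [hqdef]; linarith
  set u : ℝ → ℝ := fun s => (w s) ^ (-q) with hudef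
  have hupos : ∀ s, 0 < u s := fun s => Real.rpow_pos_of_pos (hpos s) _
  have hu : ∀ s, HasDerivAt u (u s - q) s := by
    intro s
    have h := (heq s).rpow_const (p := -q) (Or.inl (hpos s).ne')
    convert h using 1
    set x := w s with hx
    have hx0 : 0 < x := hpos s
    rw [abs_of_pos hx0]
    have e1 : x ^ q * x = x ^ (q + 1) := (Real.rpow_add_one hx0.ne' q).symm
    have e2 : x ^ (-q - 1) = x ^ (-(q + 1)) := by ring_nf
    have e3 : x ^ (q + 1) * x ^ (-(q + 1)) = 1 := by
      rw [← Real.rpow_add hx0, show q + 1 + -(q + 1) = (0:ℝ) from by ring, Real.rpow_zero]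
    have e4 : x * x ^ (-(q + 1)) = x ^ (-q) := by
      nth_rewrite 1 [← Real.rpow_one x]
      rw [← Real.rpow_add hx0]; ring_nf
    calc x ^ (-q) - q = x * x ^ (-(q + 1)) - q * (x ^ (q + 1) * x ^ (-(q + 1))) := by
          rw [e3, e4]; ring
      _ = (-x / q + x ^ q * x) * (-q) * x ^ (-q - 1) := by
          rw [e1, e2]; field_simp; ring
  set A := u 0 - q with hA
  have hconst : ∀ s, (u s - q) * Real.exp (-s) = A := by
    have hv : ∀ s, HasDerivAt (fun s => (u s - q) * Real.exp (-s)) 0 s := by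
      intro s
      have hexp : HasDerivAt (fun s : ℝ => Real.exp (-s)) (Real.exp (-s) * (-1)) s :=
        (Real.hasDerivAt_exp (-s)).comp s ((hasDerivAt_id s).neg)
      have h := ((hu s).sub_const q).mul hexp
      exact h.congr_deriv (by ring)
    intro s
    have := is_const_of_deriv_eq_zero (fun s => (hv s).differentiableAt)
      (fun s => (hv s).deriv) s 0
    simpa [hA] using this
  have husol : ∀ s, u s = q + A * Real.exp s := by
    intro s
    have h := hconst s
    rw [Real.exp_neg] at h
    field_simp at h
    linarith
  have hwu : ∀ s, w s = (u s) ^ (-(1 / q)) := by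
    intro s
    show w s = ((w s) ^ (-q)) ^ (-(1 / q))
    rw [← Real.rpow_mul (hpos s).le,
      show (-q) * (-(1 / q)) = (1:ℝ) from by field_simp, Real.rpow_one]
  rcases lt_trichotomy A 0 with hA0 | hA0 | hA0
  · exfalso
    have hpos' : 0 < q / (-A) := div_pos hq (neg_pos.mpr hA0)
    have h1 : u (Real.log (q / (-A))) = 0 := by
      rw [husol, Real.exp_log hpos']
      have hAne : A ≠ 0 := ne_of_lt hA0
      field_simp
      ring
    exact (hupos _).ne' h1
  · left
    intro s
    rw [hwu s, husol s, hA0]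
    norm_num
  · right
    refine ⟨Real.log (q / A), fun s => ?_⟩
    have hqA : 0 < q / A := div_pos hq hA0
    have hexp : Real.exp (s - Real.log (q / A)) = Real.exp s * (A / q) := by
      rw [Real.exp_sub, Real.exp_log hqA]
      field_simp
    have hus : u s = q * (1 + Real.exp (s - Real.log (q / A))) := by
      rw [husol s, hexp]; field_simp
    rw [hwu s, hus, Real.mul_rpow hq.le (by positivity)]

/-- Bounded entire solutions of w' = -w/(p-1) + |w|^{p-1}w are 0, ±κ, or
±κ(1+e^{s-s₀})^{-1/(p-1)} for some s₀. -/
theorem stmt17 (p : ℝ) (hp : 1 < p) (w : ℝ → ℝ)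
    (hbdd : ∃ C : ℝ, ∀ s, |w s| ≤ C)
    (heq : ∀ s : ℝ, HasDerivAt w (-(w s) / (p - 1) + |w s| ^ (p - 1) * w s) s) :
    (∀ s, w s = 0) ∨ (∀ s, w s = (p - 1) ^ (-(1 / (p - 1)))) ∨
      (∀ s, w s = -((p - 1) ^ (-(1 / (p - 1))))) ∨
      (∃ s₀ : ℝ,
        (∀ s, w s = (p - 1) ^ (-(1 / (p - 1))) * (1 + Real.exp (s - s₀)) ^ (-(1 / (p - 1)))) ∨
        (∀ s, w s = -((p - 1) ^ (-(1 / (p - 1))) * (1 + Real.exp (s - s₀)) ^ (-(1 / (p - 1)))))) := by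
  obtain ⟨C, hC⟩ := hbdd
  have hp1 : (0:ℝ) < p - 1 := by linarith
  set K := 1 / (p - 1) + C ^ (p - 1) with hK
  have hKb : ∀ s, |(-(w s) / (p - 1) + |w s| ^ (p - 1) * w s)| ≤ K * |w s| := by
    intro s
    have h1 : |(-(w s)) / (p - 1)| = |w s| / (p - 1) := by
      rw [abs_div, abs_neg, abs_of_pos hp1]
    have h2 : abs (|w s| ^ (p - 1) * w s) = |w s| ^ (p - 1) * |w s| := by
      rw [abs_mul, abs_of_nonneg (Real.rpow_nonneg (abs_nonneg _) _)]
    calc |(-(w s) / (p - 1) + |w s| ^ (p - 1) * w s)|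
        ≤ |(-(w s)) / (p - 1)| + abs (|w s| ^ (p - 1) * w s) := abs_add_le _ _
      _ = |w s| / (p - 1) + |w s| ^ (p - 1) * |w s| := by rw [h1, h2]
      _ ≤ (1 / (p - 1)) * |w s| + C ^ (p - 1) * |w s| := by
          refine add_le_add (le_of_eq (by ring)) ?_
          exact mul_le_mul_of_nonneg_right
            (Real.rpow_le_rpow (abs_nonneg _) (hC s) (by linarith)) (abs_nonneg _)
      _ = K * |w s| := by rw [hK]; ring
  by_cases hz : ∃ s₁, w s₁ = 0
  · obtain ⟨s₁, hs₁⟩ := hz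
    exact Or.inl (all_zero heq hKb hs₁)
  · push_neg at hz
    have hdiff : Differentiable ℝ w := fun s => (heq s).differentiableAt
    have hcont : Continuous w := hdiff.continuous
    rcases (hz 0).lt_or_gt with h0 | h0
    · -- negative case
      have hposneg : ∀ s, 0 < -(w s) :=
        pos_all (w := fun s => -(w s)) hcont.neg (fun s => neg_ne_zero.mpr (hz s))
          (by simpa using h0)
      have heq' : ∀ s, HasDerivAt (fun s => -(w s))
          (-(-(w s)) / (p - 1) + |(-(w s))| ^ (p - 1) * (-(w s))) s := by
        intro s
        have h := (heq s).neg
        exact h.congr_deriv (by rw [abs_neg]; ring)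
      rcases pos_case p hp (fun s => -(w s)) heq' hposneg with h | ⟨s₀, h⟩
      · right; right; left
        intro s
        have := h s; linarith
      · right; right; right
        refine ⟨s₀, Or.inr fun s => ?_⟩
        have := h s; linarith
    · have hposw := pos_all hcont hz h0
      rcases pos_case p hp w heq hposw with h | ⟨s₀, h⟩
      · exact Or.inr (Or.inl h)
      · exact Or.inr (Or.inr (Or.inr ⟨s₀, Or.inl h⟩))
end
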